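/- arXiv:1811.09526 — 2 statements merged into one kernel-verified Lean document; each statement's English description precedes it below -/
import Mathlib

section
/- Assume (G,K,θ) is a multiplicity-free triple. For σ an irreducible unitary G-representation on W_σ contained in Ind_K^G θ, set w^σ = L_σ v ∈ W_σ and φ^σ(g) = ⟨w^σ, σ(g)w^σ⟩. Then φ^σ is a spherical function of the triple (G,K,θ); in particular it satisfies the functional equation Σ_{k∈K} φ^σ(gkh)·conj(ψ(k)) = φ^σ(g)·φ^σ(h) for all g,h ∈ G. Moreover, for σ, ρ two irreducible G-representations contained in Ind_K^G θ, the orthogonality relations ⟨φ^σ, φ^ρ⟩_{L(G)} = (|G|/d_σ)·δ_{σ,ρ} hold, where δ_{σ,ρ} = 1 if σ ≅ ρ and 0 otherwise. -/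
/-!
Write `σ(f) = ∑ g, f g • σ g`. Averaging a rank-one map `V → W` over `K` gives a
`K`-intertwiner, hence a multiple of `L`, and a trace computation identifies the multiple: `σ(ψ)`
is the orthogonal projection onto `w = L v`. Convolving a matrix coefficient `g ↦ ⟪σ g u, w⟫`
with any function gives again a matrix coefficient, and convolving it with `ψ` on the right
gives a multiple of `φ = ⟪σ · w, w⟫`. This yields `φ ∈ H(G,K,ψ)`, the eigenfunction property
and the functional equation. The same averaging over `G`, with Schur's lemma in place of
multiplicity one, gives the orthogonality relations; when `σ ≅ ρ`, multiplicity one forces the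
intertwiner to send `w^σ` to a multiple of `w^ρ`.
-/

open scoped BigOperators ComplexConjugate Classical

set_option linter.unusedSectionVars false
set_option synthInstance.maxHeartbeats 1000000
set_option maxHeartbeats 1000000

noncomputable section

namespace MFT

variable {G : Type} [Group G] [Fintype G]
variable {V : Type} [NormedAddCommGroup V] [InnerProductSpace ℂ V] [FiniteDimensional ℂ V]

/-- Left translation of functions on `G`: `(translate h f) g = f (h⁻¹ * g)`.
This is the left regular action of `G`. -/
def translate {A : Type} (h : G) (f : G → A) : G → A := fun g => f (h⁻¹ * g)

/-- A representation by linear automorphisms is unitary if it preserves the inner product. -/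
def IsUnitaryRep {H W : Type} [Group H] [NormedAddCommGroup W] [InnerProductSpace ℂ W]
    (ρ : H →* (W ≃ₗ[ℂ] W)) : Prop :=
  ∀ (h : H) (x y : W), (inner ℂ (ρ h x) (ρ h y) : ℂ) = (inner ℂ x y : ℂ)

/-- Irreducibility of a representation: the space is nonzero and has no proper nonzero
invariant subspace. -/
def IsIrreducibleRep {H W : Type} [Group H] [AddCommGroup W] [Module ℂ W]
    (ρ : H →* (W ≃ₗ[ℂ] W)) : Prop :=
  (⊥ : Submodule ℂ W) ≠ ⊤ ∧
    ∀ p : Submodule ℂ W, (∀ (h : H) (x : W), x ∈ p → ρ h x ∈ p) → p = ⊥ ∨ p = ⊤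

variable (K : Subgroup G) (θ : ↥K →* (V ≃ₗ[ℂ] V))

/-- The space `Ind_K^G V` of the representation induced by `θ`:
functions `f : G → V` with `f (g k) = θ k⁻¹ (f g)`. -/
def ind : Submodule ℂ (G → V) where
  carrier := {f | ∀ (g : G) (k : K), f (g * (k : G)) = θ k⁻¹ (f g)}
  add_mem' := by
    intro f₁ f₂ h₁ h₂ g k
    simp only [Pi.add_apply, h₁ g k, h₂ g k, map_add]
  zero_mem' := by intro g k; simp
  smul_mem' := by
    intro c f hf g k
    simp only [Pi.smul_apply, hf g k, map_smul]

theorem translate_mem_ind {f : G → V} (hf : f ∈ ind K θ) (h : G) : translate h f ∈ ind K θ := by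
  intro g k
  simpa [translate, mul_assoc] using hf (h⁻¹ * g) k

/-- The left regular action of `G` on the induced space, `λ(h) f = f (h⁻¹ ·)`. -/
def lamL (h : G) : ↥(ind K θ) →ₗ[ℂ] ↥(ind K θ) where
  toFun f := ⟨translate h ↑f, translate_mem_ind K θ f.2 h⟩
  map_add' f₁ f₂ := by apply Subtype.ext; funext g; simp [translate]
  map_smul' c f := by apply Subtype.ext; funext g; simp [translate]

instance : AddCommGroup (↥(ind K θ) →ₗ[ℂ] ↥(ind K θ)) := LinearMap.addCommGroup

instance : Module ℂ (↥(ind K θ) →ₗ[ℂ] ↥(ind K θ)) := LinearMap.module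

/-- The Hecke algebra condition: `F (k₁ g k₂) = θ k₂⁻¹ ∘ F g ∘ θ k₁⁻¹`. -/
def IsHecke (F : G → (V →ₗ[ℂ] V)) : Prop :=
  ∀ (g : G) (k₁ k₂ : K),
    F ((k₁ : G) * g * (k₂ : G)) = (θ k₂⁻¹).toLinearMap ∘ₗ F g ∘ₗ (θ k₁⁻¹).toLinearMap

/-- Convolution on the Hecke algebra: `(F₁ * F₂) g = ∑ h, F₁ (h⁻¹ g) ∘ F₂ h`. -/
def heckeConv (F₁ F₂ : G → (V →ₗ[ℂ] V)) : G → (V →ₗ[ℂ] V) :=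
  fun g => ∑ h : G, F₁ (h⁻¹ * g) ∘ₗ F₂ h

/-- Involution on the Hecke algebra: `F* g = (F g⁻¹)*`. -/
def heckeStar (F : G → (V →ₗ[ℂ] V)) : G → (V →ₗ[ℂ] V) :=
  fun g => LinearMap.adjoint (F g⁻¹)

/-- The inner product on the Hecke algebra:
`⟨F₁, F₂⟩ = ∑ g, (dim V)⁻¹ tr (F₂(g)* ∘ F₁(g))`. -/
def heckeInner (F₁ F₂ : G → (V →ₗ[ℂ] V)) : ℂ :=
  ∑ g : G, (Module.finrank ℂ V : ℂ)⁻¹ *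
    LinearMap.trace ℂ V (LinearMap.adjoint (F₂ g) ∘ₗ F₁ g)

/-- `(ξ F) f g = ∑ h, F (h⁻¹ g) (f h)`. -/
def xiFun (F : G → (V →ₗ[ℂ] V)) (f : G → V) : G → V := fun g => ∑ h : G, F (h⁻¹ * g) (f h)

/-- `ξ F` as a linear endomorphism of `G → V`. -/
def xiL (F : G → (V →ₗ[ℂ] V)) : (G → V) →ₗ[ℂ] (G → V) where
  toFun := xiFun F
  map_add' f₁ f₂ := by funext g; simp [xiFun, Finset.sum_add_distrib]
  map_smul' c f := by funext g; simp [xiFun, Finset.smul_sum]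

/-- The paper's inner product on the induced space:
`⟨f₁, f₂⟩ = |K|⁻¹ ∑ g, ⟨f₁ g, f₂ g⟩_V` (conjugate-linear in the second variable). -/
def innerInd (f₁ f₂ : G → V) : ℂ := (Nat.card K : ℂ)⁻¹ * ∑ g : G, (inner ℂ (f₂ g) (f₁ g) : ℂ)

/-- Convolution of complex valued functions on `G`. -/
def convC (f₁ f₂ : G → ℂ) : G → ℂ := fun g => ∑ h : G, f₁ h * f₂ (h⁻¹ * g)

/-- The involution `f* g = conj (f g⁻¹)` on `L(G)`. -/
def starC (f : G → ℂ) : G → ℂ := fun g => conj (f g⁻¹)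

/-- The paper's inner product on `L(G)`: `⟨f₁, f₂⟩ = ∑ g, f₁ g • conj (f₂ g)`. -/
def innerC (f₁ f₂ : G → ℂ) : ℂ := ∑ g : G, f₁ g * conj (f₂ g)

/-- The function `ψ (k) = (d_θ/|K|) ⟨v, θ k v⟩` on `K`, extended by `0` on `G \ K`. -/
def psi (v : V) : G → ℂ := fun g =>
  if h : g ∈ K then ((Module.finrank ℂ V : ℂ) / (Nat.card K : ℂ)) * (inner ℂ (θ ⟨g, h⟩ v) v : ℂ)
  else 0

/-- `(T_v f) g = √(d_θ/|K|) ⟨f g, v⟩`. -/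
def Tv (v : V) (f : G → V) : G → ℂ := fun g =>
  (Real.sqrt ((Module.finrank ℂ V : ℝ) / (Nat.card K : ℝ)) : ℂ) * (inner ℂ v (f g) : ℂ)

/-- The Hecke algebra `H(G,K,ψ) = {f : f = ψ * f * ψ}` as a set. -/
def HSet (v : V) : Set (G → ℂ) := {f | convC (convC (psi K θ v) f) (psi K θ v) = f}

/-- `(S_v F) g = d_θ ⟨F g v, v⟩`. -/
def Sv (v : V) (F : G → (V →ₗ[ℂ] V)) : G → ℂ :=
  fun g => (Module.finrank ℂ V : ℂ) * (inner ℂ v (F g v) : ℂ)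

/-- A spherical function: an element of `H(G,K,ψ)` taking value `1` at the identity which
is an eigenvector of all convolution operators coming from `H(G,K,ψ)`. -/
def IsSpherical (v : V) (φ : G → ℂ) : Prop :=
  φ ∈ HSet K θ v ∧ φ 1 = 1 ∧ ∀ f ∈ HSet K θ v, ∃ c : ℂ, convC φ f = c • φ

/-- The intertwining space `Hom_{K_s}(Res^K_{K_s} θ, θ^s)` where `K_s = K ∩ s K s⁻¹`
and `θ^s (x) = θ (s⁻¹ x s)`. -/
def interSpace (s : G) : Submodule ℂ (V →ₗ[ℂ] V) where
  carrier := {T | ∀ (x : G) (hx : x ∈ K) (hx' : s⁻¹ * x * s ∈ K),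
      T ∘ₗ (θ ⟨x, hx⟩).toLinearMap = (θ ⟨s⁻¹ * x * s, hx'⟩).toLinearMap ∘ₗ T}
  add_mem' := by
    intro a b ha hb x hx hx'
    simp only [LinearMap.add_comp, LinearMap.comp_add, ha x hx hx', hb x hx hx']
  zero_mem' := by
    intro x hx hx'
    simp
  smul_mem' := by
    intro c a ha x hx hx'
    simp only [LinearMap.smul_comp, LinearMap.comp_smul, ha x hx hx']

/-- `S` is a complete set of representatives of the double cosets `K\G/K`. -/
def IsDoubleCosetReps (S : Finset G) : Prop :=
  ∀ g : G, ∃! s : G, s ∈ S ∧ ∃ k₁ k₂ : K, g = (k₁ : G) * s * (k₂ : G)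

/-- The commutant `End_G(Ind_K^G V)`. -/
def commutant : Submodule ℂ (↥(ind K θ) →ₗ[ℂ] ↥(ind K θ)) where
  carrier := {T | ∀ (h : G) (f : ↥(ind K θ)), T (lamL K θ h f) = lamL K θ h (T f)}
  add_mem' := by
    intro a b ha hb h f
    simp [ha h f, hb h f]
  zero_mem' := by intro h f; simp
  smul_mem' := by
    intro c a ha h f
    simp [ha h f]

/-- The space `Hom_G(W, Ind_K^G V)` of `G`-equivariant linear maps from `(σ, W)` to the
induced representation. -/
def homGInd {W : Type} [AddCommGroup W] [Module ℂ W] (σ : G →* (W ≃ₗ[ℂ] W)) :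
    Submodule ℂ (W →ₗ[ℂ] (G → V)) where
  carrier := {A | (∀ w : W, A w ∈ ind K θ) ∧ ∀ (g : G) (w : W), A (σ g w) = translate g (A w)}
  add_mem' := by
    rintro A B ⟨hA₁, hA₂⟩ ⟨hB₁, hB₂⟩
    refine ⟨fun w => (ind K θ).add_mem (hA₁ w) (hB₁ w), fun g w => ?_⟩
    funext x
    simp [translate, hA₂ g w, hB₂ g w, Pi.add_apply]
  zero_mem' := by
    refine ⟨fun w => (ind K θ).zero_mem, fun g w => ?_⟩
    funext x
    simp [translate]
  smul_mem' := by
    rintro c A ⟨hA₁, hA₂⟩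
    refine ⟨fun w => (ind K θ).smul_mem c (hA₁ w), fun g w => ?_⟩
    funext x
    simp [translate, hA₂ g w]

/-- `Ind_K^G θ` is multiplicity-free: every irreducible representation of `G` occurs with
multiplicity at most `1`. -/
def IsMultFree : Prop :=
  ∀ (W : Type) [AddCommGroup W] [Module ℂ W] [FiniteDimensional ℂ W]
    (σ : G →* (W ≃ₗ[ℂ] W)), IsIrreducibleRep σ → Module.finrank ℂ ↥(homGInd K θ σ) ≤ 1

theorem convC_add_left (f₁ f₂ g : G → ℂ) : convC (f₁ + f₂) g = convC f₁ g + convC f₂ g := by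
  funext x
  simp [convC, add_mul, Finset.sum_add_distrib]

theorem convC_add_right (f g₁ g₂ : G → ℂ) : convC f (g₁ + g₂) = convC f g₁ + convC f g₂ := by
  funext x
  simp [convC, mul_add, Finset.sum_add_distrib]

theorem convC_smul_left (c : ℂ) (f g : G → ℂ) : convC (c • f) g = c • convC f g := by
  funext x
  simp [convC, Finset.mul_sum, mul_assoc]

theorem convC_smul_right (c : ℂ) (f g : G → ℂ) : convC f (c • g) = c • convC f g := by
  funext x
  simp [convC, Finset.mul_sum, mul_left_comm]

theorem convC_zero_left (g : G → ℂ) : convC 0 g = 0 := by funext x; simp [convC]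

theorem convC_zero_right (f : G → ℂ) : convC f 0 = 0 := by funext x; simp [convC]

/-- The Hecke algebra `H(G,K,ψ)` as a subspace of `L(G)`. -/
def heckeSub (v : V) : Submodule ℂ (G → ℂ) where
  carrier := HSet K θ v
  add_mem' := by
    intro a b ha hb
    have ha' : convC (convC (psi K θ v) a) (psi K θ v) = a := ha
    have hb' : convC (convC (psi K θ v) b) (psi K θ v) = b := hb
    show convC (convC (psi K θ v) (a + b)) (psi K θ v) = a + b
    rw [convC_add_right, convC_add_left, ha', hb']
  zero_mem' := by
    show convC (convC (psi K θ v) 0) (psi K θ v) = 0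
    rw [convC_zero_right, convC_zero_left]
  smul_mem' := by
    intro c a ha
    have ha' : convC (convC (psi K θ v) a) (psi K θ v) = a := ha
    show convC (convC (psi K θ v) (c • a)) (psi K θ v) = c • a
    rw [convC_smul_right, convC_smul_left, ha']

/-- The subspace `I(G,K,ψ) = {f ∈ L(G) : f * ψ = f}`. -/
def ISub (v : V) : Submodule ℂ (G → ℂ) where
  carrier := {φ | convC φ (psi K θ v) = φ}
  add_mem' := by
    intro a b ha hb
    have ha' : convC a (psi K θ v) = a := ha
    have hb' : convC b (psi K θ v) = b := hb
    show convC (a + b) (psi K θ v) = a + b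
    rw [convC_add_left, ha', hb']
  zero_mem' := by
    show convC 0 (psi K θ v) = 0
    rw [convC_zero_left]
  smul_mem' := by
    intro c a ha
    have ha' : convC a (psi K θ v) = a := ha
    show convC (c • a) (psi K θ v) = c • a
    rw [convC_smul_left, ha']

/-- The subspace of `L(G)` spanned by the left translates of `φ`. -/
def sphSpan (φ : G → ℂ) : Submodule ℂ (G → ℂ) :=
  Submodule.span ℂ (Set.range fun g : G => translate g φ)

/-- A submodule of functions on `G` invariant under all left translations. -/
def IsInvariantSub {A : Type} [AddCommGroup A] [Module ℂ A] (p : Submodule ℂ (G → A)) : Prop :=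
  ∀ h : G, ∀ f ∈ p, translate h f ∈ p

/-- `p` is an irreducible `G`-invariant subspace of the induced representation. -/
def IsIrredSubOfInd (p : Submodule ℂ (G → V)) : Prop :=
  p ≤ ind K θ ∧ IsInvariantSub p ∧ p ≠ ⊥ ∧
    ∀ q : Submodule ℂ (G → V), q ≤ p → IsInvariantSub q → q = ⊥ ∨ q = p

/-- The matrix coefficient `φ^σ (g) = ⟨w^σ, σ(g) w^σ⟩` where `w^σ = L_σ v`. -/
def phiRep {W : Type} [NormedAddCommGroup W] [InnerProductSpace ℂ W]
    (σ : G →* (W ≃ₗ[ℂ] W)) (L : V →ₗ[ℂ] W) (v : V) : G → ℂ :=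
  fun g => (inner ℂ (σ g (L v)) (L v) : ℂ)

/-- Two representations are equivalent. -/
def ReprEquiv {W₁ W₂ : Type} [AddCommGroup W₁] [Module ℂ W₁] [AddCommGroup W₂] [Module ℂ W₂]
    (σ : G →* (W₁ ≃ₗ[ℂ] W₁)) (ρ : G →* (W₂ ≃ₗ[ℂ] W₂)) : Prop :=
  ∃ e : W₁ ≃ₗ[ℂ] W₂, ∀ (g : G) (w : W₁), e (σ g w) = ρ g (e w)

open scoped InnerProductSpace

section Representations

variable {H : Type} [Group H]
variable {W W' : Type} [NormedAddCommGroup W] [InnerProductSpace ℂ W]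
  [NormedAddCommGroup W'] [InnerProductSpace ℂ W']

def IsIntertwiner {U U' : Type} [AddCommGroup U] [Module ℂ U] [AddCommGroup U'] [Module ℂ U']
    (π : H →* (U ≃ₗ[ℂ] U)) (π' : H →* (U' ≃ₗ[ℂ] U')) (A : U →ₗ[ℂ] U') : Prop :=
  ∀ (h : H) (x : U), A (π h x) = π' h (A x)

theorem rep_inv_apply_apply {U : Type} [AddCommGroup U] [Module ℂ U] (π : H →* (U ≃ₗ[ℂ] U))
    (h : H) (x : U) : π h⁻¹ (π h x) = x := by
  simp

theorem rep_apply_inv_apply {U : Type} [AddCommGroup U] [Module ℂ U] (π : H →* (U ≃ₗ[ℂ] U))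
    (h : H) (x : U) : π h (π h⁻¹ x) = x := by
  simp

theorem IsUnitaryRep.inner_map_left {π : H →* (W ≃ₗ[ℂ] W)} (hπ : IsUnitaryRep π)
    (h : H) (x y : W) : ⟪π h x, y⟫_ℂ = ⟪x, π h⁻¹ y⟫_ℂ := by
  rw [← hπ h⁻¹, rep_inv_apply_apply]

theorem IsIntertwiner.adjoint [FiniteDimensional ℂ W] [FiniteDimensional ℂ W']
    {π : H →* (W ≃ₗ[ℂ] W)} {π' : H →* (W' ≃ₗ[ℂ] W')} (hπ : IsUnitaryRep π)
    (hπ' : IsUnitaryRep π') {A : W →ₗ[ℂ] W'} (hA : IsIntertwiner π π' A) :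
    IsIntertwiner π' π (LinearMap.adjoint A) := by
  intro h y
  refine ext_inner_right ℂ fun x => ?_
  rw [LinearMap.adjoint_inner_left, hπ'.inner_map_left, ← hA, ← LinearMap.adjoint_inner_left,
    hπ.inner_map_left]

end Representations

section Schur

variable {H : Type} [Group H]
variable {U U' : Type} [AddCommGroup U] [Module ℂ U] [AddCommGroup U'] [Module ℂ U']

theorem IsIrreducibleRep.nontrivial {π : H →* (U ≃ₗ[ℂ] U)} (hπ : IsIrreducibleRep π) :
    Nontrivial U := by
  by_contra hU
  rw [not_nontrivial_iff_subsingleton] at hU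
  exact hπ.1 (Subsingleton.elim _ _)

theorem IsIrreducibleRep.exists_eq_smul_id [FiniteDimensional ℂ U] {π : H →* (U ≃ₗ[ℂ] U)}
    (hπ : IsIrreducibleRep π) {T : U →ₗ[ℂ] U} (hT : IsIntertwiner π π T) :
    ∃ c : ℂ, T = c • LinearMap.id := by
  have := hπ.nontrivial
  obtain ⟨c, hc⟩ := Module.End.exists_eigenvalue (T : Module.End ℂ U)
  have hinv : ∀ (h : H) (x : U),
      x ∈ Module.End.eigenspace T c → π h x ∈ Module.End.eigenspace T c := by
    intro h x hx
    rw [Module.End.mem_eigenspace_iff] at hx ⊢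
    rw [hT, hx, map_smul]
  refine ⟨c, LinearMap.ext fun x => ?_⟩
  rcases hπ.2 _ hinv with h0 | htop
  · exact absurd h0 hc
  · exact Module.End.mem_eigenspace_iff.mp (htop ▸ Submodule.mem_top)

theorem IsIntertwiner.eq_zero_of_not_reprEquiv {σ : G →* (U ≃ₗ[ℂ] U)}
    {ρ : G →* (U' ≃ₗ[ℂ] U')} (hσ : IsIrreducibleRep σ) (hρ : IsIrreducibleRep ρ)
    (hne : ¬ ReprEquiv σ ρ) {B : U →ₗ[ℂ] U'} (hB : IsIntertwiner σ ρ B) : B = 0 := by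
  by_contra hB0
  have hker : ∀ (g : G) (x : U), x ∈ LinearMap.ker B → σ g x ∈ LinearMap.ker B := by
    intro g x hx
    rw [LinearMap.mem_ker] at hx ⊢
    rw [hB, hx, map_zero]
  have hrange : ∀ (g : G) (y : U'), y ∈ LinearMap.range B → ρ g y ∈ LinearMap.range B := by
    rintro g y ⟨x, rfl⟩
    exact ⟨σ g x, hB g x⟩
  rcases hσ.2 _ hker with hker_bot | hker_top
  · rcases hρ.2 _ hrange with hrange_bot | hrange_top
    · exact hB0 (LinearMap.range_eq_bot.mp hrange_bot)
    · exact hne ⟨LinearEquiv.ofBijective B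
        ⟨LinearMap.ker_eq_bot.mp hker_bot, LinearMap.range_eq_top.mp hrange_top⟩, hB⟩
  · exact hB0 (LinearMap.ker_eq_top.mp hker_top)

end Schur

section Averaging

variable {H : Type} [Group H] [Fintype H]
variable {W W' : Type} [NormedAddCommGroup W] [InnerProductSpace ℂ W]
  [NormedAddCommGroup W'] [InnerProductSpace ℂ W']

def matCoeff (π : H →* (W ≃ₗ[ℂ] W)) (u w : W) : H → ℂ := fun h => ⟪π h u, w⟫_ℂ

def repAct (π : H →* (W ≃ₗ[ℂ] W)) (f : H → ℂ) : W →ₗ[ℂ] W := ∑ h : H, f h • (π h).toLinearMap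

theorem repAct_apply (π : H →* (W ≃ₗ[ℂ] W)) (f : H → ℂ) (u : W) :
    repAct π f u = ∑ h : H, f h • π h u := by
  simp [repAct, LinearMap.sum_apply]

theorem IsIntertwiner.map_repAct {π : H →* (W ≃ₗ[ℂ] W)} {π' : H →* (W' ≃ₗ[ℂ] W')}
    {A : W →ₗ[ℂ] W'} (hA : IsIntertwiner π π' A) (f : H → ℂ) (u : W) :
    A (repAct π f u) = repAct π' f (A u) := by
  rw [repAct_apply, repAct_apply, map_sum]
  exact Finset.sum_congr rfl fun h _ => by rw [map_smul, hA]

def intertwiningAverage (π : H →* (W ≃ₗ[ℂ] W)) (π' : H →* (W' ≃ₗ[ℂ] W'))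
    (T : W →ₗ[ℂ] W') : W →ₗ[ℂ] W' :=
  ∑ h : H, (π' h).toLinearMap ∘ₗ T ∘ₗ (π h⁻¹).toLinearMap

theorem intertwiningAverage_apply (π : H →* (W ≃ₗ[ℂ] W)) (π' : H →* (W' ≃ₗ[ℂ] W'))
    (T : W →ₗ[ℂ] W') (x : W) :
    intertwiningAverage π π' T x = ∑ h : H, π' h (T (π h⁻¹ x)) := by
  simp [intertwiningAverage, LinearMap.sum_apply]

theorem isIntertwiner_intertwiningAverage (π : H →* (W ≃ₗ[ℂ] W)) (π' : H →* (W' ≃ₗ[ℂ] W'))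
    (T : W →ₗ[ℂ] W') : IsIntertwiner π π' (intertwiningAverage π π' T) := by
  intro g x
  rw [intertwiningAverage_apply, intertwiningAverage_apply, map_sum]
  refine Fintype.sum_equiv (Equiv.mulLeft g⁻¹) _ _ fun h => ?_
  rw [Equiv.coe_mulLeft, mul_inv_rev, inv_inv, map_mul, map_mul, LinearEquiv.mul_apply,
    LinearEquiv.mul_apply, rep_apply_inv_apply]

theorem intertwiningAverage_rankOne_apply {π : H →* (W ≃ₗ[ℂ] W)} (hπ : IsUnitaryRep π)
    (π' : H →* (W' ≃ₗ[ℂ] W')) (a y : W) (x : W') :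
    intertwiningAverage π π' ((innerₛₗ ℂ a).smulRight x) y = repAct π' (matCoeff π a y) x := by
  simp only [intertwiningAverage_apply, repAct_apply, matCoeff, LinearMap.smulRight_apply,
    innerₛₗ_apply_apply, map_smul, hπ.inner_map_left]

theorem repAct_matCoeff_eq_zero_of_not_reprEquiv {σ : G →* (W ≃ₗ[ℂ] W)}
    {ρ : G →* (W' ≃ₗ[ℂ] W')} (hσ : IsUnitaryRep σ) (hσirr : IsIrreducibleRep σ)
    (hρirr : IsIrreducibleRep ρ) (hne : ¬ ReprEquiv σ ρ) (a y : W) (x : W') :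
    repAct ρ (matCoeff σ a y) x = 0 := by
  rw [← intertwiningAverage_rankOne_apply hσ,
    (isIntertwiner_intertwiningAverage σ ρ _).eq_zero_of_not_reprEquiv hσirr hρirr hne,
    LinearMap.zero_apply]

end Averaging

section Orthogonality

variable {H : Type} [Group H] [Fintype H]
variable {W W' : Type} [NormedAddCommGroup W] [InnerProductSpace ℂ W] [FiniteDimensional ℂ W]
  [NormedAddCommGroup W'] [InnerProductSpace ℂ W'] [FiniteDimensional ℂ W']

/-- The average of `T` is an intertwiner, hence some `c • L`; since `tr (L† ∘ ·)` is unchanged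
by averaging and `L† ∘ L = 1`, comparing traces gives `c`. -/
theorem finrank_smul_intertwiningAverage {π : H →* (W ≃ₗ[ℂ] W)} {π' : H →* (W' ≃ₗ[ℂ] W')}
    (hπ : IsUnitaryRep π) (hπ' : IsUnitaryRep π') {L : W →ₗ[ℂ] W'}
    (hL : IsIntertwiner π π' L) (hLL : ∀ x y : W, ⟪L x, L y⟫_ℂ = ⟪x, y⟫_ℂ)
    (hspan : ∀ A : W →ₗ[ℂ] W', IsIntertwiner π π' A → ∃ c : ℂ, A = c • L) (T : W →ₗ[ℂ] W') :
    (Module.finrank ℂ W : ℂ) • intertwiningAverage π π' T =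
      ((Fintype.card H : ℂ) * LinearMap.trace ℂ W (LinearMap.adjoint L ∘ₗ T)) • L := by
  obtain ⟨c, hc⟩ := hspan _ (isIntertwiner_intertwiningAverage π π' T)
  have hLadj : LinearMap.adjoint L ∘ₗ L = LinearMap.id :=
    LinearMap.ext fun x => ext_inner_right ℂ fun y => by
      rw [LinearMap.comp_apply, LinearMap.adjoint_inner_left, hLL, LinearMap.id_apply]
  have hconj : ∀ h : H, LinearMap.adjoint L ∘ₗ (π' h).toLinearMap ∘ₗ T ∘ₗ (π h⁻¹).toLinearMap =
      (π h).conj (LinearMap.adjoint L ∘ₗ T) := fun h => LinearMap.ext fun y => by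
    simp [LinearEquiv.conj_apply, hL.adjoint hπ hπ' h]
  have htrace : c * Module.finrank ℂ W =
      (Fintype.card H : ℂ) * LinearMap.trace ℂ W (LinearMap.adjoint L ∘ₗ T) := by
    have := congrArg (LinearMap.trace ℂ W ∘ LinearMap.comp (LinearMap.adjoint L)) hc
    simp only [Function.comp_apply, LinearMap.comp_smul, hLadj, map_smul, LinearMap.trace_id,
      smul_eq_mul] at this
    have hsum : LinearMap.adjoint L ∘ₗ intertwiningAverage π π' T =
        ∑ h : H, LinearMap.adjoint L ∘ₗ (π' h).toLinearMap ∘ₗ T ∘ₗ (π h⁻¹).toLinearMap :=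
      map_sum (LinearMap.llcomp ℂ W W' W (LinearMap.adjoint L)) _ _
    rw [← this, hsum, map_sum]
    simp only [hconj, LinearMap.trace_conj', Finset.sum_const, Finset.card_univ, nsmul_eq_mul]
  rw [hc, smul_smul, mul_comm, htrace]

theorem finrank_smul_repAct_matCoeff {π : H →* (W ≃ₗ[ℂ] W)} {π' : H →* (W' ≃ₗ[ℂ] W')}
    (hπ : IsUnitaryRep π) (hπ' : IsUnitaryRep π') {L : W →ₗ[ℂ] W'}
    (hL : IsIntertwiner π π' L) (hLL : ∀ x y : W, ⟪L x, L y⟫_ℂ = ⟪x, y⟫_ℂ)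
    (hspan : ∀ A : W →ₗ[ℂ] W', IsIntertwiner π π' A → ∃ c : ℂ, A = c • L) (a y : W) (x : W') :
    (Module.finrank ℂ W : ℂ) • repAct π' (matCoeff π a y) x =
      ((Fintype.card H : ℂ) * ⟪L a, x⟫_ℂ) • L y := by
  have h := LinearMap.congr_fun
    (finrank_smul_intertwiningAverage hπ hπ' hL hLL hspan ((innerₛₗ ℂ a).smulRight x)) y
  have htrace : LinearMap.adjoint L ∘ₗ (innerₛₗ ℂ a).smulRight x =
      (innerₛₗ ℂ a).smulRight (LinearMap.adjoint L x) := by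
    ext; simp
  rwa [LinearMap.smul_apply, intertwiningAverage_rankOne_apply hπ, LinearMap.smul_apply, htrace,
    LinearMap.trace_smulRight, innerₛₗ_apply_apply, LinearMap.adjoint_inner_right] at h

theorem IsIrreducibleRep.finrank_smul_repAct_matCoeff {π : H →* (W ≃ₗ[ℂ] W)}
    (hπ : IsUnitaryRep π) (hirr : IsIrreducibleRep π) (a y x : W) :
    (Module.finrank ℂ W : ℂ) • repAct π (matCoeff π a y) x =
      ((Fintype.card H : ℂ) * ⟪a, x⟫_ℂ) • y :=
  MFT.finrank_smul_repAct_matCoeff hπ hπ (L := LinearMap.id) (fun _ _ => rfl) (fun _ _ => rfl)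
    (fun _ hA => hirr.exists_eq_smul_id hA) a y x

end Orthogonality

section Convolution

variable {W : Type} [NormedAddCommGroup W] [InnerProductSpace ℂ W]

theorem convC_assoc (a b c : G → ℂ) : convC (convC a b) c = convC a (convC b c) := by
  funext g
  simp only [convC, Finset.sum_mul, Finset.mul_sum]
  rw [Finset.sum_comm]
  refine Finset.sum_congr rfl fun j _ => Fintype.sum_equiv (Equiv.mulLeft j⁻¹) _ _ fun h => ?_
  simp only [Equiv.coe_mulLeft, mul_inv_rev, inv_inv, mul_assoc, mul_inv_cancel_left]

theorem convC_matCoeff_left (σ : G →* (W ≃ₗ[ℂ] W)) (u w : W) (f : G → ℂ) :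
    convC (matCoeff σ u w) f = matCoeff σ (repAct σ (starC f) u) w := by
  funext g
  simp only [convC, matCoeff, starC, repAct_apply, map_sum, map_smul, sum_inner,
    inner_smul_left, Complex.conj_conj]
  refine Fintype.sum_equiv (Equiv.mulLeft g⁻¹) _ _ fun h => ?_
  rw [Equiv.coe_mulLeft, ← LinearEquiv.mul_apply, ← map_mul, mul_inv_cancel_left, mul_inv_rev,
    inv_inv, mul_comm]

theorem convC_matCoeff_right {σ : G →* (W ≃ₗ[ℂ] W)} (hσ : IsUnitaryRep σ) (f : G → ℂ)
    (u w : W) : convC f (matCoeff σ u w) = matCoeff σ u (repAct σ f w) := by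
  funext g
  simp only [convC, matCoeff, repAct_apply, inner_sum, inner_smul_right]
  refine Finset.sum_congr rfl fun h _ => ?_
  rw [map_mul, LinearEquiv.mul_apply, hσ.inner_map_left, inv_inv]

theorem innerC_matCoeff {W' : Type} [NormedAddCommGroup W'] [InnerProductSpace ℂ W']
    (σ : G →* (W ≃ₗ[ℂ] W)) (ρ : G →* (W' ≃ₗ[ℂ] W')) (u w : W) (u' w' : W') :
    innerC (matCoeff σ u w) (matCoeff ρ u' w') = ⟪w', repAct ρ (matCoeff σ u w) u'⟫_ℂ := by
  simp only [innerC, matCoeff, repAct_apply, inner_sum, inner_smul_right, inner_conj_symm]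

end Convolution

section Spherical

variable {W : Type} [NormedAddCommGroup W] [InnerProductSpace ℂ W]

theorem sum_subgroup_eq_sum {M : Type} [AddCommMonoid M] (f : G → M) (hf : ∀ g ∉ K, f g = 0) :
    ∑ k : K, f k = ∑ g : G, f g := by
  rw [← Fintype.sum_subtype_add_sum_subtype (· ∈ K) f,
    Fintype.sum_eq_zero (fun g : {g // g ∉ K} => f g) (fun g => hf g g.2), add_zero]

theorem psi_apply_coe (v : V) (k : K) :
    psi K θ v k = (Module.finrank ℂ V / Nat.card K : ℂ) * matCoeff θ v v k :=
  dif_pos k.2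

theorem psi_apply_of_notMem (v : V) {g : G} (hg : g ∉ K) : psi K θ v g = 0 :=
  dif_neg hg

theorem starC_psi {θ : K →* (V ≃ₗ[ℂ] V)} (hθ : IsUnitaryRep θ) (v : V) :
    starC (psi K θ v) = psi K θ v := by
  funext g
  by_cases hg : g ∈ K
  · change conj (psi K θ v ((⟨g, hg⟩⁻¹ : K) : G)) = psi K θ v (⟨g, hg⟩ : K)
    rw [psi_apply_coe, psi_apply_coe, map_mul, map_div₀, map_natCast, map_natCast, matCoeff,
      matCoeff, inner_conj_symm, hθ.inner_map_left]
  · rw [starC, psi_apply_of_notMem K θ v hg, psi_apply_of_notMem K θ v (by simpa using hg),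
      map_zero]

theorem repAct_psi {θ : K →* (V ≃ₗ[ℂ] V)} (hθ : IsUnitaryRep θ) {σ : G →* (W ≃ₗ[ℂ] W)}
    [FiniteDimensional ℂ W] (hσ : IsUnitaryRep σ) {L : V →ₗ[ℂ] W}
    (hL : IsIntertwiner θ (σ.comp K.subtype) L) (hLL : ∀ x y : V, ⟪L x, L y⟫_ℂ = ⟪x, y⟫_ℂ)
    (hspan : ∀ A : V →ₗ[ℂ] W, IsIntertwiner θ (σ.comp K.subtype) A → ∃ c : ℂ, A = c • L)
    (v : V) (u : W) : repAct σ (psi K θ v) u = ⟪L v, u⟫_ℂ • L v := by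
  have hK : (Nat.card K : ℂ) ≠ 0 := Nat.cast_ne_zero.mpr Nat.card_pos.ne'
  have key := finrank_smul_repAct_matCoeff hθ (fun k => hσ k) hL hLL hspan v v u
  rw [← Nat.card_eq_fintype_card] at key
  calc repAct σ (psi K θ v) u = ∑ k : K, psi K θ v k • σ k u := by
        rw [repAct_apply, sum_subgroup_eq_sum K (fun g => psi K θ v g • σ g u) fun g hg => by
          rw [psi_apply_of_notMem K θ v hg, zero_smul]]
    _ = (Nat.card K : ℂ)⁻¹ • (Module.finrank ℂ V : ℂ) •
          repAct (σ.comp K.subtype) (matCoeff θ v v) u := by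
        simp only [psi_apply_coe, repAct_apply, Finset.smul_sum, smul_smul]
        refine Finset.sum_congr rfl fun k _ => ?_
        rw [div_eq_inv_mul, mul_assoc]
        rfl
    _ = ⟪L v, u⟫_ℂ • L v := by
        rw [key, smul_smul, ← mul_assoc, inv_mul_cancel₀ hK, one_mul]

variable {σ : G →* (W ≃ₗ[ℂ] W)} {v : V} {w : W}

theorem convC_psi_matCoeff (hσ : IsUnitaryRep σ)
    (hP : ∀ u, repAct σ (psi K θ v) u = ⟪w, u⟫_ℂ • w) (u : W) :
    convC (psi K θ v) (matCoeff σ u w) = ⟪w, w⟫_ℂ • matCoeff σ u w := by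
  rw [convC_matCoeff_right hσ, hP]
  funext g
  simp only [matCoeff, inner_smul_right, Pi.smul_apply, smul_eq_mul]

theorem convC_matCoeff_psi (hθ : IsUnitaryRep θ)
    (hP : ∀ u, repAct σ (psi K θ v) u = ⟪w, u⟫_ℂ • w) (u w' : W) :
    convC (matCoeff σ u w') (psi K θ v) = ⟪u, w⟫_ℂ • matCoeff σ w w' := by
  rw [convC_matCoeff_left, starC_psi K hθ, hP]
  funext g
  simp only [matCoeff, map_smul, inner_smul_left, inner_conj_symm, Pi.smul_apply, smul_eq_mul]

theorem isSpherical_matCoeff (hθ : IsUnitaryRep θ) (hσ : IsUnitaryRep σ)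
    (hP : ∀ u, repAct σ (psi K θ v) u = ⟪w, u⟫_ℂ • w) (hw : ⟪w, w⟫_ℂ = 1) :
    IsSpherical K θ v (matCoeff σ w w) := by
  have hψφ : convC (psi K θ v) (matCoeff σ w w) = matCoeff σ w w := by
    rw [convC_psi_matCoeff K θ hσ hP, hw, one_smul]
  refine ⟨?_, by rw [matCoeff, map_one]; exact hw, fun f hf => ?_⟩
  · change convC (convC (psi K θ v) _) (psi K θ v) = _
    rw [hψφ, convC_matCoeff_psi K θ hθ hP, hw, one_smul]
  · -- `φ * f = (φ * (ψ * f)) * ψ`, and `φ * (ψ * f)` is again a matrix coefficient.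
    have hf' : convC (convC (psi K θ v) f) (psi K θ v) = f := hf
    rw [← hf', ← convC_assoc, convC_matCoeff_left, convC_matCoeff_psi K θ hθ hP]
    exact ⟨_, rfl⟩

theorem sum_matCoeff_mul_conj_psi (hσ : IsUnitaryRep σ)
    (hP : ∀ u, repAct σ (psi K θ v) u = ⟪w, u⟫_ℂ • w) (g h : G) :
    ∑ k : K, matCoeff σ w w (g * k * h) * conj (psi K θ v k) =
      matCoeff σ w w g * matCoeff σ w w h := by
  calc ∑ k : K, matCoeff σ w w (g * k * h) * conj (psi K θ v k)
      = ∑ x : G, conj (psi K θ v x) * ⟪σ x (σ h w), σ g⁻¹ w⟫_ℂ := by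
        rw [← sum_subgroup_eq_sum K _ fun x hx => by rw [psi_apply_of_notMem K θ v hx, map_zero,
          zero_mul]]
        refine Finset.sum_congr rfl fun k _ => ?_
        rw [matCoeff, map_mul, map_mul, LinearEquiv.mul_apply, LinearEquiv.mul_apply,
          hσ.inner_map_left, mul_comm]
    _ = ⟪repAct σ (psi K θ v) (σ h w), σ g⁻¹ w⟫_ℂ := by
        simp only [repAct_apply, sum_inner, inner_smul_left]
    _ = matCoeff σ w w g * matCoeff σ w w h := by
        rw [hP, inner_smul_left, inner_conj_symm, matCoeff, matCoeff, hσ.inner_map_left g,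
          mul_comm]

end Spherical

theorem innerC_matCoeff_of_isIntertwiner {W₁ W₂ : Type} [NormedAddCommGroup W₁]
    [InnerProductSpace ℂ W₁] [FiniteDimensional ℂ W₁] [NormedAddCommGroup W₂]
    [InnerProductSpace ℂ W₂] {σ : G →* (W₁ ≃ₗ[ℂ] W₁)} {ρ : G →* (W₂ ≃ₗ[ℂ] W₂)}
    (hσ : IsUnitaryRep σ) (hσirr : IsIrreducibleRep σ) {w₁ : W₁} {w₂ : W₂}
    (hw₁ : ⟪w₁, w₁⟫_ℂ = 1) (hw₂ : ⟪w₂, w₂⟫_ℂ = 1) {e : W₁ ≃ₗ[ℂ] W₂}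
    (he : IsIntertwiner σ ρ e.toLinearMap) {c : ℂ} (hc : e w₁ = c • w₂) :
    innerC (matCoeff σ w₁ w₁) (matCoeff ρ w₂ w₂) =
      (Fintype.card G : ℂ) / (Module.finrank ℂ W₁ : ℂ) := by
  have hw₁0 : w₁ ≠ 0 := by rintro rfl; simp at hw₁
  have hc0 : c ≠ 0 := by
    rintro rfl
    exact hw₁0 (e.map_eq_zero_iff.mp (by rw [hc, zero_smul]))
  have hd : (Module.finrank ℂ W₁ : ℂ) ≠ 0 := by
    have : Nontrivial W₁ := ⟨⟨w₁, 0, hw₁0⟩⟩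
    exact_mod_cast Module.finrank_pos.ne'
  have hschur := hσirr.finrank_smul_repAct_matCoeff hσ w₁ w₁ w₁
  rw [hw₁, mul_one] at hschur
  have hρ : (Module.finrank ℂ W₁ : ℂ) • repAct ρ (matCoeff σ w₁ w₁) w₂ =
      (Fintype.card G : ℂ) • w₂ := by
    have hmap : e (repAct σ (matCoeff σ w₁ w₁) w₁) = repAct ρ (matCoeff σ w₁ w₁) (e w₁) :=
      he.map_repAct _ _
    refine smul_right_injective W₂ hc0 ?_
    calc c • (Module.finrank ℂ W₁ : ℂ) • repAct ρ (matCoeff σ w₁ w₁) w₂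
        = (Module.finrank ℂ W₁ : ℂ) • repAct ρ (matCoeff σ w₁ w₁) (e w₁) := by
          rw [hc, map_smul, smul_comm]
      _ = e ((Module.finrank ℂ W₁ : ℂ) • repAct σ (matCoeff σ w₁ w₁) w₁) := by
          rw [map_smul, hmap]
      _ = c • (Fintype.card G : ℂ) • w₂ := by
          rw [hschur, map_smul, hc, smul_comm]
  rw [innerC_matCoeff, eq_div_iff hd, mul_comm, ← inner_smul_right, hρ, inner_smul_right, hw₂,
    mul_one]

theorem phiRep_eq_matCoeff {W : Type} [NormedAddCommGroup W] [InnerProductSpace ℂ W]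
    (σ : G →* (W ≃ₗ[ℂ] W)) (L : V →ₗ[ℂ] W) (v : V) :
    phiRep σ L v = matCoeff σ (L v) (L v) :=
  rfl

theorem statement11_general (K : Subgroup G) (θ : ↥K →* (V ≃ₗ[ℂ] V))
    (hu : IsUnitaryRep θ) (v : V) (hv : ‖v‖ = 1)
    (W₁ : Type) [NormedAddCommGroup W₁] [InnerProductSpace ℂ W₁] [FiniteDimensional ℂ W₁]
    (σ : G →* (W₁ ≃ₗ[ℂ] W₁)) (huσ : IsUnitaryRep σ) (hirrσ : IsIrreducibleRep σ)
    (L₁ : V →ₗ[ℂ] W₁) (hL₁iso : ∀ x : V, ‖L₁ x‖ = ‖x‖)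
    (hL₁equiv : ∀ (k : K) (x : V), L₁ (θ k x) = σ (k : G) (L₁ x))
    (hL₁span : ∀ A : V →ₗ[ℂ] W₁, (∀ (k : K) (x : V), A (θ k x) = σ (k : G) (A x)) →
      ∃ c : ℂ, A = c • L₁)
    (W₂ : Type) [NormedAddCommGroup W₂] [InnerProductSpace ℂ W₂]
    (ρ : G →* (W₂ ≃ₗ[ℂ] W₂)) (hirrρ : IsIrreducibleRep ρ)
    (L₂ : V →ₗ[ℂ] W₂) (hL₂iso : ∀ x : V, ‖L₂ x‖ = ‖x‖)
    (hL₂span : ∀ A : V →ₗ[ℂ] W₂, (∀ (k : K) (x : V), A (θ k x) = ρ (k : G) (A x)) →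
      ∃ c : ℂ, A = c • L₂) :
    -- φ^σ is a spherical function of the triple (G,K,θ) ...
    IsSpherical K θ v (phiRep σ L₁ v) ∧
    -- ... and in particular satisfies the functional equation
    (∀ g h : G,
      (∑ k : K, phiRep σ L₁ v (g * (k : G) * h) * conj (psi K θ v (k : G))) =
        phiRep σ L₁ v g * phiRep σ L₁ v h) ∧
    -- orthogonality relations
    (ReprEquiv σ ρ →
      innerC (phiRep σ L₁ v) (phiRep ρ L₂ v) =
        (Fintype.card G : ℂ) / (Module.finrank ℂ W₁ : ℂ)) ∧
    (¬ ReprEquiv σ ρ → innerC (phiRep σ L₁ v) (phiRep ρ L₂ v) = 0) := by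
  simp only [phiRep_eq_matCoeff]
  have hw₁ : ⟪L₁ v, L₁ v⟫_ℂ = 1 := inner_self_eq_one_of_norm_eq_one ((hL₁iso v).trans hv)
  have hw₂ : ⟪L₂ v, L₂ v⟫_ℂ = 1 := inner_self_eq_one_of_norm_eq_one ((hL₂iso v).trans hv)
  have hP := repAct_psi K hu huσ hL₁equiv
    (⟨L₁, hL₁iso⟩ : V →ₗᵢ[ℂ] W₁).inner_map_map hL₁span v
  refine ⟨isSpherical_matCoeff K θ hu huσ hP hw₁, sum_matCoeff_mul_conj_psi K θ huσ hP, ?_,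
    fun hne => ?_⟩
  · rintro ⟨e, he⟩
    obtain ⟨c, hc⟩ := hL₂span (e.toLinearMap ∘ₗ L₁) fun k x => by simp [hL₁equiv, he]
    exact innerC_matCoeff_of_isIntertwiner huσ hirrσ hw₁ hw₂ he (LinearMap.congr_fun hc v)
  · rw [innerC_matCoeff, repAct_matCoeff_eq_zero_of_not_reprEquiv huσ hirrσ hirrρ hne,
      inner_zero_right]

/-- For a multiplicity-free triple `(G,K,θ)` and an irreducible unitary
`G`-representation `σ` contained in `Ind_K^G θ`, the matrix coefficient
`φ^σ (g) = ⟨w^σ, σ(g) w^σ⟩`, `w^σ = L_σ v`, is a spherical function (and satisfies the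
functional equation); and for two such representations `σ, ρ` the orthogonality relations
`⟨φ^σ, φ^ρ⟩ = (|G|/d_σ) δ_{σ,ρ}` hold. -/
theorem statement11 (K : Subgroup G) (θ : ↥K →* (V ≃ₗ[ℂ] V))
    (hu : IsUnitaryRep θ) (hirr : IsIrreducibleRep θ) (v : V) (hv : ‖v‖ = 1)
    (hmf : IsMultFree K θ)
    (W₁ : Type) [NormedAddCommGroup W₁] [InnerProductSpace ℂ W₁] [FiniteDimensional ℂ W₁]
    (σ : G →* (W₁ ≃ₗ[ℂ] W₁)) (huσ : IsUnitaryRep σ) (hirrσ : IsIrreducibleRep σ)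
    (hcontσ : homGInd K θ σ ≠ ⊥)
    (L₁ : V →ₗ[ℂ] W₁) (hL₁iso : ∀ x : V, ‖L₁ x‖ = ‖x‖)
    (hL₁equiv : ∀ (k : K) (x : V), L₁ (θ k x) = σ (k : G) (L₁ x))
    (hL₁span : ∀ A : V →ₗ[ℂ] W₁, (∀ (k : K) (x : V), A (θ k x) = σ (k : G) (A x)) →
      ∃ c : ℂ, A = c • L₁)
    (W₂ : Type) [NormedAddCommGroup W₂] [InnerProductSpace ℂ W₂] [FiniteDimensional ℂ W₂]
    (ρ : G →* (W₂ ≃ₗ[ℂ] W₂)) (huρ : IsUnitaryRep ρ) (hirrρ : IsIrreducibleRep ρ)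
    (hcontρ : homGInd K θ ρ ≠ ⊥)
    (L₂ : V →ₗ[ℂ] W₂) (hL₂iso : ∀ x : V, ‖L₂ x‖ = ‖x‖)
    (hL₂equiv : ∀ (k : K) (x : V), L₂ (θ k x) = ρ (k : G) (L₂ x))
    (hL₂span : ∀ A : V →ₗ[ℂ] W₂, (∀ (k : K) (x : V), A (θ k x) = ρ (k : G) (A x)) →
      ∃ c : ℂ, A = c • L₂) :
    -- φ^σ is a spherical function of the triple (G,K,θ) ...
    IsSpherical K θ v (phiRep σ L₁ v) ∧
    -- ... and in particular satisfies the functional equation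
    (∀ g h : G,
      (∑ k : K, phiRep σ L₁ v (g * (k : G) * h) * conj (psi K θ v (k : G))) =
        phiRep σ L₁ v g * phiRep σ L₁ v h) ∧
    -- orthogonality relations
    (ReprEquiv σ ρ →
      innerC (phiRep σ L₁ v) (phiRep ρ L₂ v) =
        (Fintype.card G : ℂ) / (Module.finrank ℂ W₁ : ℂ)) ∧
    (¬ ReprEquiv σ ρ → innerC (phiRep σ L₁ v) (phiRep ρ L₂ v) = 0) :=
  statement11_general K θ hu v hv W₁ σ huσ hirrσ L₁ hL₁iso hL₁equiv hL₁span W₂ ρ hirrρ L₂ hL₂iso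
    hL₂span

end MFT
end
end

section
/- Let N be a normal subgroup of the finite group G and (θ,V) an irreducible unitary representation of N. Then dim_ℂ End_G(Ind_N^G V) = [I_G(θ) : N], the index of N in the inertia group of θ. -/
open scoped BigOperators ComplexConjugate Classical

set_option linter.unusedSectionVars false
set_option synthInstance.maxHeartbeats 1000000
set_option maxHeartbeats 1000000

noncomputable section

namespace MFT

variable {G : Type} [Group G] [Fintype G]
variable {V : Type} [NormedAddCommGroup V] [InnerProductSpace ℂ V] [FiniteDimensional ℂ V]

variable (K : Subgroup G) (θ : ↥K →* (V ≃ₗ[ℂ] V))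

/-- `I` is the inertia group `I_G(θ) = {g ∈ G : {}^g θ ∼ θ}` of the representation `θ` of the
normal subgroup `N`, where `{}^g θ (n) = θ (g⁻¹ n g)`. -/
def IsInertia (N : Subgroup G) (θ : ↥N →* (V ≃ₗ[ℂ] V)) (I : Subgroup G) : Prop :=
  ∀ g : G, g ∈ I ↔
    ∃ T : V ≃ₗ[ℂ] V, ∀ (n m : G) (hn : n ∈ N) (hm : m ∈ N), m = g⁻¹ * n * g →
      T.toLinearMap ∘ₗ (θ ⟨n, hn⟩).toLinearMap = (θ ⟨m, hm⟩).toLinearMap ∘ₗ T.toLinearMap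

/-!
Convolution, `(ξ F f) g = ∑ h, F (h⁻¹ g) (f h)`, identifies `End_G(Ind_N^G V)` with the Hecke
algebra of functions `F : G → End V` satisfying `F (k₁ g k₂) = θ k₂⁻¹ ∘ F g ∘ θ k₁⁻¹`; conversely
`F g v` is read off, up to the factor `|N|`, from the image of the function `δ_v` supported on `N`
with `δ_v n = θ n⁻¹ v`. As `N` is normal, such an `F` is determined by its values at coset
representatives `s`, and these can be chosen freely among the intertwiners from `θ` to `^sθ`. By
Schur's lemma that space is a line if `s ∈ I_G(θ)` and zero otherwise, so the dimension counts the
cosets of `N` in `I_G(θ)`.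
-/

section Schur

variable {H W : Type} [Group H] [AddCommGroup W] [Module ℂ W] {ρ : H →* (W ≃ₗ[ℂ] W)}

theorem IsIrreducibleRep.nontrivial_s14 (hρ : IsIrreducibleRep ρ) : Nontrivial W :=
  not_subsingleton_iff_nontrivial.mp fun _ => hρ.1 (Subsingleton.elim _ _)

theorem coe_map_mul_eq_comp (ρ : H →* (W ≃ₗ[ℂ] W)) (a b : H) :
    (ρ (a * b) : W →ₗ[ℂ] W) = (ρ a : W →ₗ[ℂ] W) ∘ₗ (ρ b : W →ₗ[ℂ] W) := by
  rw [map_mul]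
  rfl

theorem IsIrreducibleRep.bijective_of_intertwines [FiniteDimensional ℂ W]
    (hρ : IsIrreducibleRep ρ) {σ : H → W →ₗ[ℂ] W} {T : W →ₗ[ℂ] W}
    (hT : ∀ h, T ∘ₗ (ρ h : W →ₗ[ℂ] W) = σ h ∘ₗ T) (hT0 : T ≠ 0) : Function.Bijective T := by
  have hker : ∀ h x, x ∈ LinearMap.ker T → ρ h x ∈ LinearMap.ker T := fun h x hx => by
    simpa [LinearMap.mem_ker.mp hx] using LinearMap.congr_fun (hT h) x
  rcases hρ.2 _ hker with hbot | htop
  · have hinj := LinearMap.ker_eq_bot.mp hbot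
    exact ⟨hinj, LinearMap.injective_iff_surjective.mp hinj⟩
  · exact absurd (LinearMap.ker_eq_top.mp htop) hT0

theorem IsIrreducibleRep.exists_eq_smul_id_s14 [FiniteDimensional ℂ W] (hρ : IsIrreducibleRep ρ)
    {A : W →ₗ[ℂ] W} (hA : ∀ h, A ∘ₗ (ρ h : W →ₗ[ℂ] W) = (ρ h : W →ₗ[ℂ] W) ∘ₗ A) :
    ∃ c : ℂ, A = c • LinearMap.id := by
  have := hρ.nontrivial_s14
  obtain ⟨c, hc⟩ := Module.End.exists_eigenvalue A
  obtain ⟨v, hv⟩ := hc.exists_hasEigenvector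
  refine ⟨c, sub_eq_zero.mp ?_⟩
  -- `A - c • id` intertwines `ρ` with itself but kills an eigenvector, so it cannot be nonzero.
  by_contra hne
  have hbij := hρ.bijective_of_intertwines (σ := fun h => ρ h)
    (fun h => by rw [LinearMap.sub_comp, LinearMap.comp_sub, hA h]; ext; simp) hne
  exact hv.2 (hbij.1 (by simpa [sub_eq_zero] using hv.apply_eq_smul))

theorem IsIrreducibleRep.exists_eq_smul_of_intertwines [FiniteDimensional ℂ W]
    (hρ : IsIrreducibleRep ρ) {σ : H → W →ₗ[ℂ] W} {T₀ : W ≃ₗ[ℂ] W}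
    (hT₀ : ∀ h, (T₀ : W →ₗ[ℂ] W) ∘ₗ (ρ h : W →ₗ[ℂ] W) = σ h ∘ₗ T₀) {T : W →ₗ[ℂ] W}
    (hT : ∀ h, T ∘ₗ (ρ h : W →ₗ[ℂ] W) = σ h ∘ₗ T) : ∃ c : ℂ, T = c • (T₀ : W →ₗ[ℂ] W) := by
  obtain ⟨c, hc⟩ := hρ.exists_eq_smul_id_s14 (A := T₀.symm ∘ₗ T) fun h => by
    ext x
    have h₀ := LinearMap.congr_fun (hT₀ h) (T₀.symm (T x))
    have h₁ := LinearMap.congr_fun (hT h) x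
    simp only [LinearMap.comp_apply, LinearEquiv.coe_coe, LinearEquiv.apply_symm_apply] at h₀ h₁ ⊢
    rw [h₁, ← h₀, LinearEquiv.symm_apply_apply]
  refine ⟨c, LinearMap.ext fun x => ?_⟩
  simpa using congrArg T₀ (LinearMap.congr_fun hc x)

variable (ρ) in
def intertwiners (σ : H → W →ₗ[ℂ] W) : Submodule ℂ (W →ₗ[ℂ] W) where
  carrier := {T | ∀ h, T ∘ₗ (ρ h : W →ₗ[ℂ] W) = σ h ∘ₗ T}
  add_mem' ha hb h := by simp only [LinearMap.add_comp, LinearMap.comp_add, ha h, hb h]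
  zero_mem' h := by simp
  smul_mem' c T hT h := by simp only [LinearMap.smul_comp, LinearMap.comp_smul, hT h]

theorem IsIrreducibleRep.finrank_intertwiners [FiniteDimensional ℂ W] (hρ : IsIrreducibleRep ρ)
    (σ : H → W →ₗ[ℂ] W) :
    Module.finrank ℂ (intertwiners ρ σ) =
      if ∃ T₀ : W ≃ₗ[ℂ] W, (T₀ : W →ₗ[ℂ] W) ∈ intertwiners ρ σ then 1 else 0 := by
  split_ifs with h
  · obtain ⟨T₀, hT₀⟩ := h
    have hspan : intertwiners ρ σ = ℂ ∙ (T₀ : W →ₗ[ℂ] W) := by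
      refine le_antisymm (fun T hT => ?_) ((Submodule.span_singleton_le_iff_mem _ _).mpr hT₀)
      obtain ⟨c, rfl⟩ := hρ.exists_eq_smul_of_intertwines hT₀ hT
      exact Submodule.smul_mem _ c (Submodule.mem_span_singleton_self _)
    have := hρ.nontrivial_s14
    obtain ⟨v, hv⟩ := exists_ne (0 : W)
    refine hspan ▸ finrank_span_singleton fun h0 => hv (T₀.injective ?_)
    simpa using LinearMap.congr_fun h0 v
  · refine Submodule.finrank_eq_zero.mpr ((Submodule.eq_bot_iff _).mpr fun T hT => ?_)
    by_contra hT0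
    exact h ⟨.ofBijective T (hρ.bijective_of_intertwines hT hT0), hT⟩

end Schur

section Hecke

variable {K}

def delta : V →ₗ[ℂ] (G → V) :=
  LinearMap.pi fun x => if hx : x ∈ K then (θ ⟨x, hx⟩⁻¹ : V →ₗ[ℂ] V) else 0

theorem delta_apply_of_mem (v : V) {x : G} (hx : x ∈ K) : delta θ v x = θ ⟨x, hx⟩⁻¹ v := by
  simp [delta, hx]

theorem delta_apply_of_notMem (v : V) {x : G} (hx : x ∉ K) : delta θ v x = 0 := by
  simp [delta, hx]

theorem delta_mem_ind (v : V) : delta θ v ∈ ind K θ := by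
  intro g k
  by_cases hg : g ∈ K
  · rw [delta_apply_of_mem θ v hg, delta_apply_of_mem θ v (K.mul_mem hg k.2)]
    change θ (⟨g, hg⟩ * k)⁻¹ v = _
    simp
  · have hgk : g * k ∉ K := fun h => hg (by simpa using K.mul_mem h (K.inv_mem k.2))
    rw [delta_apply_of_notMem θ v hg, delta_apply_of_notMem θ v hgk, map_zero]

def deltaInd : V →ₗ[ℂ] ind K θ := (delta θ).codRestrict _ (delta_mem_ind θ)

theorem lamL_inv_deltaInd (k : K) (v : V) :
    lamL K θ (k : G)⁻¹ (deltaInd θ v) = deltaInd θ (θ k⁻¹ v) := by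
  refine Subtype.ext (funext fun x => ?_)
  change delta θ v ((k : G)⁻¹⁻¹ * x) = delta θ (θ k⁻¹ v) x
  rw [inv_inv]
  by_cases hx : x ∈ K
  · rw [delta_apply_of_mem θ _ (K.mul_mem k.2 hx), delta_apply_of_mem θ _ hx]
    change θ (k * ⟨x, hx⟩)⁻¹ v = _
    simp
  · have hkx : (k : G) * x ∉ K := fun h => hx (by simpa using K.mul_mem (K.inv_mem k.2) h)
    rw [delta_apply_of_notMem θ _ hkx, delta_apply_of_notMem θ _ hx]

variable {θ}

theorem sum_eq_sum_subgroup {M : Type*} [AddCommMonoid M] {f : G → M}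
    (hf : ∀ g ∉ K, f g = 0) : ∑ g, f g = ∑ k : K, f k := by
  rw [← Fintype.sum_subtype_add_sum_subtype (· ∈ K) f,
    Finset.sum_eq_zero fun (g : {g // g ∉ K}) _ => hf g g.2, add_zero]

theorem xiFun_delta {F : G → V →ₗ[ℂ] V} (hF : IsHecke K θ F) (v : V) (g : G) :
    xiFun F (delta θ v) g = (Nat.card K : ℂ) • F g v := by
  have hterm : ∀ k : K, F ((k : G)⁻¹ * g) (delta θ v k) = F g v := fun k => by
    rw [delta_apply_of_mem θ v k.2,
      show (k : G)⁻¹ * g = ((k⁻¹ : K) : G) * g * ((1 : K) : G) by simp, hF]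
    simp
  rw [xiFun, sum_eq_sum_subgroup fun h hh => by rw [delta_apply_of_notMem θ v hh, map_zero]]
  simp [hterm, Nat.card_eq_fintype_card, Nat.cast_smul_eq_nsmul]

theorem xiFun_mem_ind {F : G → V →ₗ[ℂ] V} (hF : IsHecke K θ F) (f : G → V) :
    xiFun F f ∈ ind K θ := by
  intro g k
  simp only [xiFun, map_sum]
  refine Finset.sum_congr rfl fun h _ => ?_
  rw [← mul_assoc, show h⁻¹ * g * k = ((1 : K) : G) * (h⁻¹ * g) * k by simp, hF]
  simp

theorem xiFun_translate (F : G → V →ₗ[ℂ] V) (h : G) (f : G → V) :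
    xiFun F (translate h f) = translate h (xiFun F f) := by
  funext g
  simp only [xiFun, translate]
  rw [← Equiv.sum_comp (Equiv.mulLeft h)]
  simp [mul_assoc]

variable (θ) in
def heckeModule : Submodule ℂ (G → V →ₗ[ℂ] V) where
  carrier := {F | IsHecke K θ F}
  add_mem' ha hb g k₁ k₂ := by
    simp only [Pi.add_apply, ha g k₁ k₂, hb g k₁ k₂, LinearMap.add_comp, LinearMap.comp_add]
  zero_mem' g k₁ k₂ := by simp
  smul_mem' c F hF g k₁ k₂ := by
    simp only [Pi.smul_apply, hF g k₁ k₂, LinearMap.smul_comp, LinearMap.comp_smul]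

variable (θ) in
def heckeToCommutant : heckeModule θ →ₗ[ℂ] commutant K θ where
  toFun F := ⟨(xiL F.1).restrict fun f _ => xiFun_mem_ind F.2 f,
    fun h f => Subtype.ext (xiFun_translate F.1 h f)⟩
  map_add' F₁ F₂ := by
    ext f g
    simp [xiL, xiFun, Finset.sum_add_distrib]
  map_smul' c F := by
    ext f g
    simp [xiL, xiFun, Finset.smul_sum]

theorem heckeToCommutant_apply (F : heckeModule θ) (f : ind K θ) :
    ((heckeToCommutant θ F : ind K θ →ₗ[ℂ] ind K θ) f : G → V) = xiFun F f :=
  rfl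

theorem heckeToCommutant_injective : Function.Injective (heckeToCommutant θ) := by
  refine (injective_iff_map_eq_zero _).mpr fun F hF => Subtype.ext ?_
  funext g
  ext v
  have h0 := congrFun (congrArg Subtype.val (LinearMap.congr_fun (congrArg Subtype.val hF)
    (deltaInd θ v))) g
  rw [heckeToCommutant_apply] at h0
  have hK : (Nat.card K : ℂ) ≠ 0 := Nat.cast_ne_zero.mpr Nat.card_pos.ne'
  simpa [deltaInd, xiFun_delta F.2, hK] using h0

variable (θ) in
def heckeOfEnd (T : ind K θ →ₗ[ℂ] ind K θ) : G → V →ₗ[ℂ] V := fun g =>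
  (Nat.card K : ℂ)⁻¹ • (LinearMap.proj g ∘ₗ (ind K θ).subtype ∘ₗ T ∘ₗ deltaInd θ)

theorem heckeOfEnd_apply (T : ind K θ →ₗ[ℂ] ind K θ) (g : G) (v : V) :
    heckeOfEnd θ T g v = (Nat.card K : ℂ)⁻¹ • (T (deltaInd θ v) : G → V) g :=
  rfl

theorem apply_inv_mul_of_mem_commutant {T : ind K θ →ₗ[ℂ] ind K θ} (hT : T ∈ commutant K θ)
    (h : G) (f : ind K θ) (g : G) :
    (T f : G → V) (h⁻¹ * g) = (T (lamL K θ h f) : G → V) g := by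
  rw [hT h f]
  rfl

theorem isHecke_heckeOfEnd {T : ind K θ →ₗ[ℂ] ind K θ} (hT : T ∈ commutant K θ) :
    IsHecke K θ (heckeOfEnd θ T) := by
  intro g k₁ k₂
  ext v
  have hleft : (T (deltaInd θ v) : G → V) (k₁ * g) = (T (deltaInd θ (θ k₁⁻¹ v)) : G → V) g := by
    rw [← inv_inv (k₁ : G), apply_inv_mul_of_mem_commutant hT, lamL_inv_deltaInd]
  simp only [LinearMap.comp_apply, LinearEquiv.coe_coe, heckeOfEnd_apply, map_smul,
    (T (deltaInd θ v)).2 (k₁ * g) k₂, hleft]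

theorem sum_lamL_deltaInd (f : ind K θ) :
    ∑ h, lamL K θ h (deltaInd θ ((f : G → V) h)) = (Nat.card K : ℂ) • f := by
  ext g
  simp only [Submodule.coe_sum, Finset.sum_apply, Submodule.coe_smul, Pi.smul_apply]
  rw [← Equiv.sum_comp ((Equiv.inv G).trans (Equiv.mulLeft g))]
  have hterm : ∀ x : G, ((lamL K θ (g * x⁻¹) (deltaInd θ ((f : G → V) (g * x⁻¹))) : G → V) g)
      = delta θ ((f : G → V) (g * x⁻¹)) x := fun x => by
    change delta θ _ ((g * x⁻¹)⁻¹ * g) = _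
    group
  simp only [Equiv.coe_trans, Function.comp_apply, Equiv.inv_apply, Equiv.coe_mulLeft, hterm]
  rw [sum_eq_sum_subgroup fun x hx => delta_apply_of_notMem θ _ hx]
  have hk : ∀ k : K, delta θ ((f : G → V) (g * (k : G)⁻¹)) k = (f : G → V) g := fun k => by
    rw [delta_apply_of_mem θ _ k.2, ← f.2, inv_mul_cancel_right]
  simp [hk, Nat.card_eq_fintype_card, Nat.cast_smul_eq_nsmul]

theorem heckeToCommutant_surjective : Function.Surjective (heckeToCommutant θ) := by
  rintro ⟨T, hT⟩
  refine ⟨⟨heckeOfEnd θ T, isHecke_heckeOfEnd hT⟩, Subtype.ext (LinearMap.ext fun f => ?_)⟩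
  ext g
  have hK : (Nat.card K : ℂ) ≠ 0 := Nat.cast_ne_zero.mpr Nat.card_pos.ne'
  calc xiFun (heckeOfEnd θ T) f g
      = (Nat.card K : ℂ)⁻¹ • (T (∑ h, lamL K θ h (deltaInd θ ((f : G → V) h))) : G → V) g := by
        simp only [xiFun, heckeOfEnd_apply, apply_inv_mul_of_mem_commutant hT, ← Finset.smul_sum,
          map_sum, Submodule.coe_sum, Finset.sum_apply]
    _ = (T f : G → V) g := by
        rw [sum_lamL_deltaInd, map_smul, Submodule.coe_smul, Pi.smul_apply, inv_smul_smul₀ hK]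

theorem finrank_commutant :
    Module.finrank ℂ (commutant K θ) = Module.finrank ℂ (heckeModule θ) :=
  (LinearEquiv.ofBijective (heckeToCommutant θ)
    ⟨heckeToCommutant_injective, heckeToCommutant_surjective⟩).finrank_eq.symm

end Hecke

section Normal

variable {K θ}

theorem IsHecke.apply_mul_right {F : G → V →ₗ[ℂ] V} (hF : IsHecke K θ F) (g : G) (k : K) :
    F (g * k) = (θ k⁻¹ : V →ₗ[ℂ] V) ∘ₗ F g := by
  simpa using hF g 1 k

theorem IsHecke.mem_interSpace {F : G → V →ₗ[ℂ] V} (hF : IsHecke K θ F) (s : G) :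
    F s ∈ interSpace K θ s := by
  intro x hx hx'
  have h := hF s ⟨x, hx⟩⁻¹ ⟨s⁻¹ * x * s, hx'⟩
  simp only [InvMemClass.coe_inv, show x⁻¹ * s * (s⁻¹ * x * s) = s by group, inv_inv] at h
  ext v
  simpa using congrArg (θ ⟨s⁻¹ * x * s, hx'⟩) (LinearMap.congr_fun h v).symm

theorem comp_mem_interSpace {T : V →ₗ[ℂ] V} {s g : G} (hT : T ∈ interSpace K θ s)
    (hg : s⁻¹ * g ∈ K) : (θ ⟨s⁻¹ * g, hg⟩⁻¹ : V →ₗ[ℂ] V) ∘ₗ T ∈ interSpace K θ g := by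
  intro x hx hx'
  have hs : s⁻¹ * x * s ∈ K := by
    simpa [mul_assoc] using K.mul_mem (K.mul_mem hg hx') (K.inv_mem hg)
  rw [LinearMap.comp_assoc, hT x hx hs, ← LinearMap.comp_assoc, ← LinearMap.comp_assoc]
  congr 1
  rw [← coe_map_mul_eq_comp, ← coe_map_mul_eq_comp]
  congr 2
  ext
  simp [mul_assoc]

theorem isHecke_of_mem_interSpace (hK : K.Normal) {F : G → V →ₗ[ℂ] V}
    (hright : ∀ g (k : K), F (g * k) = (θ k⁻¹ : V →ₗ[ℂ] V) ∘ₗ F g)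
    (hmem : ∀ g, F g ∈ interSpace K θ g) : IsHecke K θ F := by
  intro g k₁ k₂
  have hm : g⁻¹ * (k₁ : G)⁻¹ * g ∈ K := hK.conj_mem' _ (K.inv_mem k₁.2) g
  have hconj : (k₁ : G) * g = g * ((⟨g⁻¹ * (k₁ : G)⁻¹ * g, hm⟩⁻¹ : K) : G) := by simp [mul_assoc]
  rw [hright, hconj, hright, inv_inv, ← hmem g _ (K.inv_mem k₁.2) hm]
  rfl

theorem out_inv_mul_mem (g : G) : (g : G ⧸ K).out⁻¹ * g ∈ K :=
  QuotientGroup.eq.mp (QuotientGroup.out_eq' _)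

variable (θ) in
def heckeOfReps (u : ∀ c : G ⧸ K, interSpace K θ c.out) : G → V →ₗ[ℂ] V := fun g =>
  (θ ⟨(g : G ⧸ K).out⁻¹ * g, out_inv_mul_mem g⟩⁻¹ : V →ₗ[ℂ] V) ∘ₗ u g

theorem heckeOfReps_eq (u : ∀ c : G ⧸ K, interSpace K θ c.out) {g : G} {c : G ⧸ K}
    (hgc : (g : G ⧸ K) = c) (hg : c.out⁻¹ * g ∈ K) :
    heckeOfReps θ u g = (θ ⟨c.out⁻¹ * g, hg⟩⁻¹ : V →ₗ[ℂ] V) ∘ₗ u c := by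
  subst hgc
  rfl

theorem heckeOfReps_out (u : ∀ c : G ⧸ K, interSpace K θ c.out) (c : G ⧸ K) :
    heckeOfReps θ u c.out = u c := by
  have h1 : (⟨c.out⁻¹ * c.out, by simp⟩ : K) = 1 := Subtype.ext (inv_mul_cancel _)
  rw [heckeOfReps_eq u (QuotientGroup.out_eq' c) (by simp), h1]
  simp

theorem heckeOfReps_mul_right (u : ∀ c : G ⧸ K, interSpace K θ c.out) (g : G) (k : K) :
    heckeOfReps θ u (g * k) = (θ k⁻¹ : V →ₗ[ℂ] V) ∘ₗ heckeOfReps θ u g := by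
  have hgk : ((g * k : G) : G ⧸ K) = g := QuotientGroup.eq.mpr (by simp)
  rw [heckeOfReps_eq u hgk (by simpa [mul_assoc] using K.mul_mem (out_inv_mul_mem g) k.2),
    heckeOfReps, ← LinearMap.comp_assoc, ← coe_map_mul_eq_comp, ← mul_inv_rev]
  congr 4
  ext
  simp [mul_assoc]

theorem isHecke_heckeOfReps (hK : K.Normal) (u : ∀ c : G ⧸ K, interSpace K θ c.out) :
    IsHecke K θ (heckeOfReps θ u) :=
  isHecke_of_mem_interSpace hK (heckeOfReps_mul_right u) fun g =>
    comp_mem_interSpace (u g).2 (out_inv_mul_mem g)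

variable (θ) in
def restrictReps : heckeModule θ →ₗ[ℂ] ∀ c : G ⧸ K, interSpace K θ c.out where
  toFun F c := ⟨F.1 c.out, IsHecke.mem_interSpace F.2 c.out⟩
  map_add' _ _ := rfl
  map_smul' _ _ := rfl

theorem restrictReps_injective : Function.Injective (restrictReps θ) := by
  intro F₁ F₂ h
  refine Subtype.ext (funext fun g => ?_)
  have hg : g = (g : G ⧸ K).out * ((⟨_, out_inv_mul_mem g⟩ : K) : G) := by simp
  rw [hg, F₁.2.apply_mul_right, F₂.2.apply_mul_right]
  exact congrArg _ (congrArg Subtype.val (congrFun h g))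

theorem restrictReps_surjective (hK : K.Normal) : Function.Surjective (restrictReps θ) :=
  fun u => ⟨⟨heckeOfReps θ u, isHecke_heckeOfReps hK u⟩,
    funext fun c => Subtype.ext (heckeOfReps_out u c)⟩

theorem finrank_heckeModule (hK : K.Normal) :
    Module.finrank ℂ (heckeModule θ) = ∑ c : G ⧸ K, Module.finrank ℂ (interSpace K θ c.out) := by
  rw [← Module.finrank_pi_fintype ℂ]
  exact (LinearEquiv.ofBijective (restrictReps θ)
    ⟨restrictReps_injective, restrictReps_surjective hK⟩).finrank_eq

end Normal

section Inertia

variable {K θ}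

theorem interSpace_eq_intertwiners (hK : K.Normal) (s : G) :
    interSpace K θ s = intertwiners θ fun k => θ ⟨s⁻¹ * k * s, hK.conj_mem' _ k.2 s⟩ := by
  ext T
  exact ⟨fun hT k => hT k k.2 _, fun hT x hx _ => hT ⟨x, hx⟩⟩

theorem IsInertia.mem_iff {I : Subgroup G} (hI : IsInertia K θ I) (s : G) :
    s ∈ I ↔ ∃ T : V ≃ₗ[ℂ] V, (T : V →ₗ[ℂ] V) ∈ interSpace K θ s :=
  (hI s).trans <| exists_congr fun _ =>
    ⟨fun h x hx hx' => h x _ hx hx' rfl, fun h _ _ hn hm hnm => by subst hnm; exact h _ hn hm⟩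

theorem IsInertia.le {I : Subgroup G} (hI : IsInertia K θ I) : K ≤ I := by
  intro k hk
  refine (hI.mem_iff k).mpr ⟨θ ⟨k, hk⟩⁻¹, fun x hx hx' => ?_⟩
  rw [← coe_map_mul_eq_comp, ← coe_map_mul_eq_comp]
  congr 2
  ext
  simp [mul_assoc]

theorem finrank_interSpace (hK : K.Normal) (hirr : IsIrreducibleRep θ) {I : Subgroup G}
    (hI : IsInertia K θ I) (s : G) :
    Module.finrank ℂ (interSpace K θ s) = if s ∈ I then 1 else 0 := by
  rw [interSpace_eq_intertwiners hK, hirr.finrank_intertwiners]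
  simp only [hI.mem_iff, interSpace_eq_intertwiners hK]

theorem sum_ite_out_mem_eq_relIndex (hK : K.Normal) {I : Subgroup G} (hKI : K ≤ I) :
    ∑ c : G ⧸ K, (if c.out ∈ I then 1 else 0) = K.relIndex I := by
  have := hK
  have hout : ∀ c : G ⧸ K, c.out ∈ I ↔ c ∈ I.map (QuotientGroup.mk' K) := fun c =>
    ⟨fun h => ⟨c.out, h, QuotientGroup.out_eq' c⟩, by
      rintro ⟨g, hg, rfl⟩
      obtain ⟨k, hk⟩ := QuotientGroup.mk_out_eq_mul K g
      rw [QuotientGroup.mk'_apply, hk]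
      exact I.mul_mem hg (hKI k.2)⟩
  have hcard := Subgroup.relIndex_ker I (QuotientGroup.mk' K)
  rw [QuotientGroup.ker_mk'] at hcard
  simp_rw [hout, hcard, Finset.sum_boole]
  rw [Nat.cast_id, ← Fintype.card_subtype, Nat.card_eq_fintype_card]

end Inertia

theorem statement14_general (N : Subgroup G) (hN : N.Normal) (θ : ↥N →* (V ≃ₗ[ℂ] V))
    (hirr : IsIrreducibleRep θ)
    (I : Subgroup G) (hI : IsInertia N θ I) :
    Module.finrank ℂ ↥(commutant N θ) = N.relIndex I := by
  rw [finrank_commutant, finrank_heckeModule hN]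
  simp_rw [finrank_interSpace hN hirr hI]
  exact sum_ite_out_mem_eq_relIndex hN hI.le

/-- For a normal subgroup `N ⊴ G` and an irreducible unitary
`N`-representation `θ`, the dimension of the commutant `End_G(Ind_N^G V)` equals the index
`[I_G(θ) : N]` of `N` in the inertia group. -/
theorem statement14 (N : Subgroup G) (hN : N.Normal) (θ : ↥N →* (V ≃ₗ[ℂ] V))
    (hu : IsUnitaryRep θ) (hirr : IsIrreducibleRep θ)
    (I : Subgroup G) (hI : IsInertia N θ I) :
    Module.finrank ℂ ↥(commutant N θ) = N.relIndex I :=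
  statement14_general N hN θ hirr I hI

end MFT
end
end
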